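/- arXiv:2306.05299 — 7 statements merged into one kernel-verified Lean document; each statement's English description precedes it below -/
import Mathlib

section
/- Under the stated assumptions (Lemma 1, mean and variance), for every t ∈ ℤ one has E(Δy_t) = 0 and E((Δy_t)²) = 2 · E(σ²) · E(1/(1+φ)). -/
open MeasureTheory ProbabilityTheory Filter

/-- Index type for the joint independence assumption: `none` indexes the pair of
random coefficients `(φ, σ)` and `some ℓ` indexes the standardized error `ε_ℓ`. -/
abbrev HetAR1.Codomain : Option ℤ → Type
  | none => ℝ × ℝ
  | some _ => ℝ

instance HetAR1.instMeasurableSpaceCodomain : ∀ i, MeasurableSpace (HetAR1.Codomain i)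
  | none => inferInstanceAs (MeasurableSpace (ℝ × ℝ))
  | some _ => inferInstanceAs (MeasurableSpace ℝ)

/-- The family consisting of the pair `(φ, σ)` together with all the errors `ε_ℓ`. -/
def HetAR1.family {Ω : Type*} (φ σ : Ω → ℝ) (ε : ℤ → Ω → ℝ) :
    ∀ i : Option ℤ, Ω → HetAR1.Codomain i
  | none => fun ω => (φ ω, σ ω)
  | some ℓ => ε ℓ

/-!
With `ψ₀ = 1` and `ψ_{j+1}(φ) = -(1 - φ) φ ^ j` (`HetAR1.maCoeff`), the truncations are
`X_M = ∑_{j ≤ M} σ ψ_j(φ) ε_{t-j}`. As `(φ, σ)` is independent of the centred, unit-variance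
errors, the summands are orthogonal in `L²`: `E X_M = 0` and
`E X_M² = ∑_{j ≤ M} E[σ² ψ_j(φ)²] = E σ² · E ∑_{j ≤ M} ψ_j(φ)²`, using `σ ⟂ φ`.
For `-1 < x ≤ 1` the series `∑ ψ_j(x)²` sums to `2 / (1 + x)`, which is at most `2 / ε₀` on the
support of `φ`; dominated convergence gives the limit, and both moments pass to the `L²` limit
`Δy_t`.
-/

open Topology Finset

section L2Limits

variable {ι Ω : Type*} [MeasurableSpace Ω] {P : Measure Ω} {l : Filter ι}

theorem tendsto_integral_mul_of_tendsto_eLpNorm {X Y : ι → Ω → ℝ} {X' Y' : Ω → ℝ}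
    (hX : ∀ i, MemLp (X i) 2 P) (hX' : MemLp X' 2 P)
    (hY : ∀ i, MemLp (Y i) 2 P) (hY' : MemLp Y' 2 P)
    (hXX' : Tendsto (fun i => eLpNorm (X i - X') 2 P) l (𝓝 0))
    (hYY' : Tendsto (fun i => eLpNorm (Y i - Y') 2 P) l (𝓝 0)) :
    Tendsto (fun i => ∫ ω, X i ω * Y i ω ∂P) l (𝓝 (∫ ω, X' ω * Y' ω ∂P)) := by
  have integral_mul_eq_inner {f g : Ω → ℝ} (hf : MemLp f 2 P) (hg : MemLp g 2 P) :
      ∫ ω, f ω * g ω ∂P = inner ℝ (hf.toLp f) (hg.toLp g) := by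
    rw [L2.inner_def]
    refine integral_congr_ae ?_
    filter_upwards [hf.coeFn_toLp, hg.coeFn_toLp] with ω hfω hgω
    simp [hfω, hgω, mul_comm]
  simp only [integral_mul_eq_inner (hX _) (hY _), integral_mul_eq_inner hX' hY']
  exact ((Lp.tendsto_Lp_iff_tendsto_eLpNorm'' X hX X' hX').2 hXX').inner
    ((Lp.tendsto_Lp_iff_tendsto_eLpNorm'' Y hY Y' hY').2 hYY')

theorem tendsto_integral_of_tendsto_eLpNorm [IsFiniteMeasure P] {X : ι → Ω → ℝ} {X' : Ω → ℝ}
    (hX : ∀ i, MemLp (X i) 2 P) (hX' : MemLp X' 2 P)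
    (hXX' : Tendsto (fun i => eLpNorm (X i - X') 2 P) l (𝓝 0)) :
    Tendsto (fun i => ∫ ω, X i ω ∂P) l (𝓝 (∫ ω, X' ω ∂P)) := by
  simpa using tendsto_integral_mul_of_tendsto_eLpNorm hX hX' (fun _ => memLp_const 1)
    (memLp_const 1) hXX' (by simpa using tendsto_const_nhds)

theorem tendsto_integral_sq_of_tendsto_eLpNorm {X : ι → Ω → ℝ} {X' : Ω → ℝ}
    (hX : ∀ i, MemLp (X i) 2 P) (hX' : MemLp X' 2 P)
    (hXX' : Tendsto (fun i => eLpNorm (X i - X') 2 P) l (𝓝 0)) :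
    Tendsto (fun i => ∫ ω, X i ω ^ 2 ∂P) l (𝓝 (∫ ω, X' ω ^ 2 ∂P)) := by
  simpa only [sq] using tendsto_integral_mul_of_tendsto_eLpNorm hX hX' hX hX' hXX' hXX'

end L2Limits

section Orthogonality

variable {Ω β ι κ : Type*} [MeasurableSpace Ω] [MeasurableSpace β] {P : Measure Ω}
  {Z : Ω → β} {e : ι → Ω → ℝ}

theorem integral_comp_mul_eq_zero {a : ι} (hZ : AEMeasurable Z P)
    (he : AEStronglyMeasurable (e a) P) (hmean : ∫ ω, e a ω ∂P = 0) (hind : IndepFun Z (e a) P)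
    {g : β → ℝ} (hg : Measurable g) :
    ∫ ω, g (Z ω) * e a ω ∂P = 0 := by
  have hprod : ∫ ω, g (Z ω) * e a ω ∂P = (∫ ω, g (Z ω) ∂P) * ∫ ω, e a ω ∂P :=
    (hind.comp hg measurable_id).integral_fun_mul_eq_mul_integral
      (hg.comp_aemeasurable hZ).aestronglyMeasurable he
  rw [hprod, hmean, mul_zero]

theorem memLp_comp_mul {a : ι} (hZ : AEMeasurable Z P) (he : MemLp (e a) 2 P)
    (hind : IndepFun Z (e a) P) {g : β → ℝ} (hg : Measurable g)
    (hgZ : MemLp (fun ω => g (Z ω)) 2 P) :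
    MemLp (fun ω => g (Z ω) * e a ω) 2 P := by
  have hsq : Integrable (fun ω => g (Z ω) ^ 2 * e a ω ^ 2) P :=
    (hind.comp (hg.pow_const 2) (measurable_id.pow_const 2)).integrable_mul
      hgZ.integrable_sq he.integrable_sq
  refine (memLp_two_iff_integrable_sq
    ((hg.comp_aemeasurable hZ).aestronglyMeasurable.mul he.1)).2 ?_
  exact hsq.congr (ae_of_all _ fun ω => (mul_pow _ _ 2).symm)

theorem integral_comp_mul_mul_comp_mul [DecidableEq ι] (hZ : AEMeasurable Z P)
    (he : ∀ a, AEStronglyMeasurable (e a) P) (hmean : ∀ a, ∫ ω, e a ω ∂P = 0)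
    (hvar : ∀ a, ∫ ω, e a ω ^ 2 ∂P = 1) (hind : ∀ a, IndepFun Z (e a) P)
    (hind₂ : ∀ a b, a ≠ b → IndepFun (fun ω => (Z ω, e a ω)) (e b) P)
    {g h : β → ℝ} (hg : Measurable g) (hh : Measurable h) (a b : ι) :
    ∫ ω, (g (Z ω) * e a ω) * (h (Z ω) * e b ω) ∂P =
      if a = b then ∫ ω, g (Z ω) * h (Z ω) ∂P else 0 := by
  have hgh : Measurable fun z => g z * h z := hg.mul hh
  split_ifs with hab
  · subst hab
    have hprod : ∫ ω, g (Z ω) * h (Z ω) * e a ω ^ 2 ∂P =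
        (∫ ω, g (Z ω) * h (Z ω) ∂P) * ∫ ω, e a ω ^ 2 ∂P :=
      ((hind a).comp hgh (measurable_id.pow_const 2)).integral_fun_mul_eq_mul_integral
        (hgh.comp_aemeasurable hZ).aestronglyMeasurable ((he a).pow 2)
    rw [hvar, mul_one] at hprod
    rw [← hprod]
    congr 1 with ω
    ring
  · have hprod : ∫ ω, g (Z ω) * h (Z ω) * e a ω * e b ω ∂P =
        (∫ ω, g (Z ω) * h (Z ω) * e a ω ∂P) * ∫ ω, e b ω ∂P :=
      ((hind₂ a b hab).comp ((hgh.comp measurable_fst).mul measurable_snd)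
        measurable_id).integral_fun_mul_eq_mul_integral
        ((hgh.comp_aemeasurable hZ).aestronglyMeasurable.mul (he a)) (he b)
    rw [hmean, mul_zero] at hprod
    rw [← hprod]
    congr 1 with ω
    ring

theorem integral_sum_comp_mul_eq_zero [IsFiniteMeasure P] (hZ : AEMeasurable Z P)
    (he : ∀ a, MemLp (e a) 2 P) (hmean : ∀ a, ∫ ω, e a ω ∂P = 0)
    (hind : ∀ a, IndepFun Z (e a) P) (s : Finset κ) (a : κ → ι) {g : κ → β → ℝ}
    (hg : ∀ j, Measurable (g j)) (hgZ : ∀ j, MemLp (fun ω => g j (Z ω)) 2 P) :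
    ∫ ω, ∑ j ∈ s, g j (Z ω) * e (a j) ω ∂P = 0 := by
  rw [integral_finsetSum s fun j _ =>
    (memLp_comp_mul hZ (he _) (hind _) (hg j) (hgZ j)).integrable one_le_two]
  exact sum_eq_zero fun j _ => integral_comp_mul_eq_zero hZ (he _).1 (hmean _) (hind _) (hg j)

theorem integral_sq_sum_comp_mul [IsFiniteMeasure P] (hZ : AEMeasurable Z P)
    (he : ∀ a, MemLp (e a) 2 P) (hmean : ∀ a, ∫ ω, e a ω ∂P = 0)
    (hvar : ∀ a, ∫ ω, e a ω ^ 2 ∂P = 1) (hind : ∀ a, IndepFun Z (e a) P)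
    (hind₂ : ∀ a b, a ≠ b → IndepFun (fun ω => (Z ω, e a ω)) (e b) P)
    (s : Finset κ) {a : κ → ι} (ha : Set.InjOn a s) {g : κ → β → ℝ}
    (hg : ∀ j, Measurable (g j)) (hgZ : ∀ j, MemLp (fun ω => g j (Z ω)) 2 P) :
    ∫ ω, (∑ j ∈ s, g j (Z ω) * e (a j) ω) ^ 2 ∂P = ∑ j ∈ s, ∫ ω, g j (Z ω) ^ 2 ∂P := by
  classical
  have hL2 (j : κ) : MemLp (fun ω => g j (Z ω) * e (a j) ω) 2 P :=
    memLp_comp_mul hZ (he _) (hind _) (hg j) (hgZ j)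
  have hint (j k : κ) : Integrable
      (fun ω => (g j (Z ω) * e (a j) ω) * (g k (Z ω) * e (a k) ω)) P :=
    (hL2 j).integrable_mul (hL2 k)
  simp_rw [sq, sum_mul_sum]
  rw [integral_finsetSum _ fun j _ => integrable_finsetSum _ fun k _ => hint j k]
  refine sum_congr rfl fun j hj => ?_
  rw [integral_finsetSum _ fun k _ => hint j k]
  simp_rw [integral_comp_mul_mul_comp_mul hZ (fun a => (he a).1) hmean hvar hind hind₂
    (hg _) (hg _)]
  rw [sum_eq_single_of_mem j hj fun k hk hkj => if_neg fun h => hkj (ha hk hj h.symm),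
    if_pos rfl]

end Orthogonality

namespace HetAR1

variable {Ω : Type*} [MeasurableSpace Ω] {P : Measure Ω}

def maCoeff : ℕ → ℝ → ℝ
  | 0, _ => 1
  | j + 1, x => -((1 - x) * x ^ j)

@[fun_prop]
theorem measurable_maCoeff (j : ℕ) : Measurable (maCoeff j) := by
  cases j with
  | zero => exact measurable_const
  | succ j => exact ((measurable_const.sub measurable_id).mul (measurable_id.pow_const j)).neg

theorem abs_maCoeff_le {x : ℝ} (hx : |x| ≤ 1) (j : ℕ) : |maCoeff j x| ≤ 2 := by
  cases j with
  | zero => norm_num [maCoeff]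
  | succ j =>
    rw [maCoeff, abs_neg, abs_mul, abs_pow]
    have h1 : |1 - x| ≤ 2 := (abs_sub _ _).trans (by norm_num; linarith)
    have h2 : |x| ^ j ≤ 1 := pow_le_one₀ (abs_nonneg x) hx
    nlinarith [abs_nonneg (1 - x), pow_nonneg (abs_nonneg x) j]

theorem hasSum_sq_maCoeff {x : ℝ} (h₁ : -1 < x) (h₂ : x ≤ 1) :
    HasSum (fun j => maCoeff j x ^ 2) (2 / (1 + x)) := by
  have hx : 1 + x ≠ 0 := by linarith
  have htail : HasSum (fun j => (1 - x) ^ 2 * (x ^ 2) ^ j) ((1 - x) / (1 + x)) := by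
    rcases h₂.lt_or_eq with hlt | rfl
    · have hgeom := (hasSum_geometric_of_lt_one (sq_nonneg x) (by nlinarith)).mul_left
        ((1 - x) ^ 2)
      have hx' : 1 - x ≠ 0 := by linarith
      rwa [show 1 - x ^ 2 = (1 - x) * (1 + x) by ring, ← div_eq_mul_inv, pow_two,
        mul_div_mul_left _ _ hx', ← pow_two] at hgeom
    · simp [hasSum_zero]
  have hshift : (fun j => maCoeff (j + 1) x ^ 2) = fun j => (1 - x) ^ 2 * (x ^ 2) ^ j := by
    funext j
    simp only [maCoeff]
    ring
  have hval : 2 / (1 + x) - ∑ j ∈ range 1, maCoeff j x ^ 2 = (1 - x) / (1 + x) := by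
    simp only [range_one, sum_singleton, maCoeff]
    field_simp
    ring
  refine (hasSum_nat_add_iff' 1).1 ?_
  rw [hshift, hval]
  exact htail

theorem mul_sub_mul_sum_eq_sum_maCoeff (s x : ℝ) (e : ℤ → ℝ) (t : ℤ) (M : ℕ) :
    s * (e t - (1 - x) * ∑ ℓ ∈ range M, x ^ ℓ * e (t - ((ℓ : ℤ) + 1))) =
      ∑ j ∈ range (M + 1), s * maCoeff j x * e (t - j) := by
  simp only [sum_range_succ', maCoeff, mul_sum, Nat.cast_add, Nat.cast_one, Nat.cast_zero,
    sub_zero, mul_one, mul_sub, mul_neg, neg_mul, sum_neg_distrib]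
  ring_nf

theorem tendsto_integral_sum_sq_maCoeff [IsFiniteMeasure P] {φ : Ω → ℝ} (hφ : AEMeasurable φ P)
    {ε₀ : ℝ} (hε₀ : 0 < ε₀) (hφbd : ∀ᵐ ω ∂P, -1 + ε₀ ≤ φ ω ∧ φ ω ≤ 1) :
    Tendsto (fun M => ∫ ω, ∑ j ∈ range M, maCoeff j (φ ω) ^ 2 ∂P) atTop
      (𝓝 (∫ ω, 2 / (1 + φ ω) ∂P)) := by
  have hsum : ∀ᵐ ω ∂P, HasSum (fun j => maCoeff j (φ ω) ^ 2) (2 / (1 + φ ω)) := by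
    filter_upwards [hφbd] with ω hω
    exact hasSum_sq_maCoeff (by linarith) hω.2
  refine tendsto_integral_of_dominated_convergence (fun _ => 2 / ε₀)
    (fun M => ((Finset.measurable_sum _ fun j _ =>
      (measurable_maCoeff j).pow_const 2).comp_aemeasurable hφ).aestronglyMeasurable)
    (integrable_const _) (fun M => ?_) ?_
  · filter_upwards [hsum, hφbd] with ω hω hφω
    rw [Real.norm_of_nonneg (sum_nonneg fun j _ => sq_nonneg _)]
    calc ∑ j ∈ range M, maCoeff j (φ ω) ^ 2 ≤ 2 / (1 + φ ω) :=
          sum_le_hasSum _ (fun j _ => sq_nonneg _) hω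
      _ ≤ 2 / ε₀ := div_le_div_of_nonneg_left zero_le_two hε₀ (by linarith)
  · filter_upwards [hsum] with ω hω
    exact hω.tendsto_sum_nat

theorem indepFun_coeff_error {φ σ : Ω → ℝ} {ε : ℤ → Ω → ℝ}
    (hindep : iIndepFun (m := instMeasurableSpaceCodomain) (family φ σ ε) P) (a : ℤ) :
    IndepFun (fun ω => (φ ω, σ ω)) (ε a) P :=
  hindep.indepFun (i := none) (j := some a) (Option.some_ne_none a).symm

theorem indepFun_coeff_error_error {φ σ : Ω → ℝ} {ε : ℤ → Ω → ℝ}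
    (hindep : iIndepFun (m := instMeasurableSpaceCodomain) (family φ σ ε) P)
    (hφ : AEMeasurable φ P) (hσ : AEMeasurable σ P) (hε : ∀ ℓ, AEMeasurable (ε ℓ) P)
    (a b : ℤ) (hab : a ≠ b) :
    IndepFun (fun ω => ((φ ω, σ ω), ε a ω)) (ε b) P := by
  refine hindep.indepFun_prodMk₀ (fun i => ?_) none (some a) (some b) (by simp) (by simpa using hab)
  cases i with
  | none => exact hφ.prodMk hσ
  | some ℓ => exact hε ℓ

theorem memLp_mul_maCoeff {φ σ : Ω → ℝ} (hφ : AEMeasurable φ P) (hσ : MemLp σ 2 P)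
    (hφbd : ∀ᵐ ω ∂P, |φ ω| ≤ 1) (j : ℕ) :
    MemLp (fun ω => σ ω * maCoeff j (φ ω)) 2 P := by
  refine (hσ.const_mul 2).of_le
    (hσ.1.mul ((measurable_maCoeff j).comp_aemeasurable hφ).aestronglyMeasurable) ?_
  filter_upwards [hφbd] with ω hω
  rw [Real.norm_eq_abs, Real.norm_eq_abs, abs_mul, abs_mul, abs_two, mul_comm 2]
  exact mul_le_mul_of_nonneg_left (abs_maCoeff_le hω j) (abs_nonneg _)

theorem sum_integral_sq_mul_maCoeff [IsFiniteMeasure P] {φ σ : Ω → ℝ} (hφ : AEMeasurable φ P)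
    (hσ : AEMeasurable σ P) (hφσ : IndepFun φ σ P) (hφbd : ∀ᵐ ω ∂P, |φ ω| ≤ 1) (s : Finset ℕ) :
    ∑ j ∈ s, ∫ ω, (σ ω * maCoeff j (φ ω)) ^ 2 ∂P =
      (∫ ω, σ ω ^ 2 ∂P) * ∫ ω, ∑ j ∈ s, maCoeff j (φ ω) ^ 2 ∂P := by
  have hmeas (j : ℕ) : AEStronglyMeasurable (fun ω => maCoeff j (φ ω) ^ 2) P :=
    (((measurable_maCoeff j).pow_const 2).comp_aemeasurable hφ).aestronglyMeasurable
  have hint (j : ℕ) : Integrable (fun ω => maCoeff j (φ ω) ^ 2) P := by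
    refine .of_bound (hmeas j) (2 ^ 2) ?_
    filter_upwards [hφbd] with ω hω
    rw [Real.norm_of_nonneg (sq_nonneg _), ← sq_abs]
    exact pow_le_pow_left₀ (abs_nonneg _) (abs_maCoeff_le hω j) 2
  have hsplit (j : ℕ) : ∫ ω, (σ ω * maCoeff j (φ ω)) ^ 2 ∂P =
      (∫ ω, σ ω ^ 2 ∂P) * ∫ ω, maCoeff j (φ ω) ^ 2 ∂P := by
    simp_rw [mul_pow]
    exact (hφσ.symm.comp (measurable_id.pow_const 2)
      ((measurable_maCoeff j).pow_const 2)).integral_fun_mul_eq_mul_integral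
      (hσ.pow_const 2).aestronglyMeasurable (hmeas j)
  rw [integral_finsetSum s fun j _ => hint j, mul_sum]
  exact sum_congr rfl fun j _ => hsplit j

end HetAR1

open HetAR1

theorem het_first_diff_mean_variance_general
    {Ω : Type*} [MeasurableSpace Ω] (P : Measure Ω) [IsProbabilityMeasure P]
    (φ σ : Ω → ℝ) (ε : ℤ → Ω → ℝ) (ε₀ : ℝ) (hε₀ : 0 < ε₀)
    (hφm : Measurable φ) (hφbd : ∀ᵐ ω ∂P, -1 + ε₀ ≤ φ ω ∧ φ ω ≤ 1)
    (hσm : Measurable σ)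
    (hσ2 : Integrable (fun ω => (σ ω) ^ 2) P)
    (hε2 : ∀ ℓ : ℤ, MemLp (ε ℓ) 2 P)
    (hεmean : ∀ ℓ : ℤ, ∫ ω, ε ℓ ω ∂P = 0)
    (hεvar : ∀ ℓ : ℤ, ∫ ω, (ε ℓ ω) ^ 2 ∂P = 1)
    (hindep : iIndepFun (m := HetAR1.instMeasurableSpaceCodomain) (HetAR1.family φ σ ε) P)
    (hφσ : IndepFun φ σ P)
    (Δy : ℤ → Ω → ℝ)
    (hΔ2 : ∀ t : ℤ, MemLp (Δy t) 2 P)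
    (hΔL2 : ∀ t : ℤ, Tendsto (fun M : ℕ =>
        eLpNorm (fun ω => σ ω * (ε t ω -
          (1 - φ ω) * ∑ ℓ ∈ Finset.range M, φ ω ^ ℓ * ε (t - ((ℓ : ℤ) + 1)) ω)
          - Δy t ω) 2 P)
      atTop (nhds 0)) :
    ∀ t : ℤ,
      (∫ ω, Δy t ω ∂P = 0) ∧
      (∫ ω, (Δy t ω) ^ 2 ∂P =
        2 * (∫ ω, (σ ω) ^ 2 ∂P) * (∫ ω, 1 / (1 + φ ω) ∂P)) := by
  intro t
  have hφabs : ∀ᵐ ω ∂P, |φ ω| ≤ 1 := hφbd.mono fun ω h => abs_le.2 ⟨by linarith, h.2⟩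
  have hZ : AEMeasurable (fun ω => (φ ω, σ ω)) P := (hφm.prodMk hσm).aemeasurable
  have hind := indepFun_coeff_error hindep
  have hind₂ := indepFun_coeff_error_error hindep hφm.aemeasurable hσm.aemeasurable
    fun ℓ => (hε2 ℓ).1.aemeasurable
  have hg (j : ℕ) : Measurable fun z : ℝ × ℝ => z.2 * maCoeff j z.1 := by fun_prop
  have hgZ := memLp_mul_maCoeff hφm.aemeasurable
    ((memLp_two_iff_integrable_sq hσm.aestronglyMeasurable).2 hσ2) hφabs
  let X (M : ℕ) (ω : Ω) : ℝ := ∑ j ∈ range (M + 1), σ ω * maCoeff j (φ ω) * ε (t - j) ω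
  have hX (M : ℕ) : MemLp (X M) 2 P := memLp_finsetSum _ fun j _ =>
    memLp_comp_mul hZ (hε2 _) (hind _) (hg j) (hgZ j)
  have hXΔ : Tendsto (fun M => eLpNorm (X M - Δy t) 2 P) atTop (𝓝 0) := by
    refine (hΔL2 t).congr fun M => ?_
    congr 1 with ω
    exact congrArg (· - Δy t ω) (mul_sub_mul_sum_eq_sum_maCoeff _ _ (fun k => ε k ω) t M)
  constructor
  · refine tendsto_nhds_unique (tendsto_integral_of_tendsto_eLpNorm hX (hΔ2 t) hXΔ) ?_
    simp only [X, integral_sum_comp_mul_eq_zero hZ hε2 hεmean hind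
      _ _ hg hgZ, tendsto_const_nhds]
  · have hsq (M : ℕ) : ∫ ω, X M ω ^ 2 ∂P =
        (∫ ω, σ ω ^ 2 ∂P) * ∫ ω, ∑ j ∈ range (M + 1), maCoeff j (φ ω) ^ 2 ∂P :=
      (integral_sq_sum_comp_mul hZ hε2 hεmean hεvar hind hind₂ _
        (sub_right_injective.comp Nat.cast_injective).injOn hg hgZ).trans
      (sum_integral_sq_mul_maCoeff hφm.aemeasurable hσm.aemeasurable hφσ hφabs _)
    have hlim := ((tendsto_add_atTop_iff_nat 1).2
      (tendsto_integral_sum_sq_maCoeff hφm.aemeasurable hε₀ hφbd)).const_mul (∫ ω, σ ω ^ 2 ∂P)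
    refine tendsto_nhds_unique (tendsto_integral_sq_of_tendsto_eLpNorm hX (hΔ2 t) hXΔ) ?_
    simp_rw [hsq]
    convert hlim using 2
    simp_rw [← mul_one_div (2 : ℝ), integral_const_mul]
    ring

/-- (Lemma 1, mean and variance) Under the stated assumptions, for every `t ∈ ℤ`,
`E(Δy_t) = 0` and `E((Δy_t)²) = 2 · E(σ²) · E(1/(1+φ))`. -/
theorem het_first_diff_mean_variance
    {Ω : Type*} [MeasurableSpace Ω] (P : Measure Ω) [IsProbabilityMeasure P]
    (φ σ : Ω → ℝ) (ε : ℤ → Ω → ℝ) (ε₀ : ℝ) (hε₀ : 0 < ε₀)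
    (hφm : Measurable φ) (hφbd : ∀ᵐ ω ∂P, -1 + ε₀ ≤ φ ω ∧ φ ω ≤ 1)
    (hσm : Measurable σ) (hσ0 : ∀ ω, 0 ≤ σ ω)
    (hσ2 : Integrable (fun ω => (σ ω) ^ 2) P)
    (hε2 : ∀ ℓ : ℤ, MemLp (ε ℓ) 2 P)
    (hεmean : ∀ ℓ : ℤ, ∫ ω, ε ℓ ω ∂P = 0)
    (hεvar : ∀ ℓ : ℤ, ∫ ω, (ε ℓ ω) ^ 2 ∂P = 1)
    (hindep : iIndepFun (m := HetAR1.instMeasurableSpaceCodomain) (HetAR1.family φ σ ε) P)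
    (hφσ : IndepFun φ σ P)
    (Δy : ℤ → Ω → ℝ)
    (hΔ2 : ∀ t : ℤ, MemLp (Δy t) 2 P)
    (hΔrep : ∀ t : ℤ, ∀ᵐ ω ∂P,
      (Summable fun ℓ : ℕ => |φ ω ^ ℓ * ε (t - ((ℓ : ℤ) + 1)) ω|) ∧
      Δy t ω = σ ω * (ε t ω -
        (1 - φ ω) * ∑' ℓ : ℕ, φ ω ^ ℓ * ε (t - ((ℓ : ℤ) + 1)) ω))
    (hΔL2 : ∀ t : ℤ, Tendsto (fun M : ℕ =>
        eLpNorm (fun ω => σ ω * (ε t ω -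
          (1 - φ ω) * ∑ ℓ ∈ Finset.range M, φ ω ^ ℓ * ε (t - ((ℓ : ℤ) + 1)) ω)
          - Δy t ω) 2 P)
      atTop (nhds 0)) :
    ∀ t : ℤ,
      (∫ ω, Δy t ω ∂P = 0) ∧
      (∫ ω, (Δy t ω) ^ 2 ∂P =
        2 * (∫ ω, (σ ω) ^ 2 ∂P) * (∫ ω, 1 / (1 + φ ω) ∂P)) :=
  het_first_diff_mean_variance_general P φ σ ε ε₀ hε₀ hφm hφbd hσm hσ2 hε2 hεmean hεvar hindep hφσ
    Δy hΔ2 hΔL2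
end

section
/- Under the stated assumptions, the first moment of the autoregressive coefficient is identified from the first two autocorrelations of first differences: E(φ) = (1 + 2ρ₁ + ρ₂)/(1 + ρ₁). -/
open MeasureTheory

/-!
With `w = 1 / (1 + φ)` one has `(1 - φ) / (1 + φ) = 2w - 1` and `(1 - φ) φ / (1 + φ) = 2 - 2w - φ`,
so with `d = E[w]` the two autocorrelations are `ρ₁ = (1 - 2d) / (2d)` and
`ρ₂ = (2d + E[φ] - 2) / (2d)`. Hence `1 + ρ₁ = 1 / (2d)` and `1 + 2ρ₁ + ρ₂ = E[φ] / (2d)`,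
and `d ≥ 1/2` because `1 + φ ≤ 2`.
-/

lemma one_sub_div_one_add_eq {x : ℝ} (hx : 1 + x ≠ 0) :
    (1 - x) / (1 + x) = 2 * (1 / (1 + x)) - 1 := by
  field_simp
  ring

lemma one_sub_div_one_add_mul_self_eq {x : ℝ} (hx : 1 + x ≠ 0) :
    (1 - x) / (1 + x) * x = 2 - 2 * (1 / (1 + x)) - x := by
  field_simp
  ring

lemma eq_div_of_autocorrelations {d m r₁ r₂ : ℝ} (hd : d ≠ 0)
    (h₁ : r₁ = -(2 * d - 1) / (2 * d)) (h₂ : r₂ = -(2 - 2 * d - m) / (2 * d)) :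
    m = (1 + 2 * r₁ + r₂) / (1 + r₁) := by
  have hden : 1 + r₁ = 1 / (2 * d) := by
    rw [h₁]; field_simp; ring
  have hnum : 1 + 2 * r₁ + r₂ = m / (2 * d) := by
    rw [h₁, h₂]; field_simp; ring
  rw [hnum, hden]
  field_simp

section

variable {Ω : Type*} [MeasurableSpace Ω] {P : Measure Ω} {φ : Ω → ℝ}

lemma integrable_one_div_one_add [IsFiniteMeasure P] (hφm : Measurable φ) {ε₀ : ℝ}
    (hε₀ : 0 < ε₀) (hφ : ∀ᵐ ω ∂P, ε₀ ≤ 1 + φ ω) :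
    Integrable (fun ω => 1 / (1 + φ ω)) P := by
  refine .of_bound (measurable_const.div (measurable_const.add hφm)).aestronglyMeasurable
    (1 / ε₀) ?_
  filter_upwards [hφ] with ω hω
  rw [Real.norm_eq_abs, abs_of_pos (one_div_pos.2 (hε₀.trans_le hω))]
  exact one_div_le_one_div_of_le hε₀ hω

lemma integrable_of_ae_abs_le_one [IsFiniteMeasure P] (hφm : Measurable φ)
    (hφ : ∀ᵐ ω ∂P, |φ ω| ≤ 1) : Integrable φ P :=
  .of_bound hφm.aestronglyMeasurable 1 hφ

variable [IsProbabilityMeasure P]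

lemma half_le_integral_one_div_one_add (hint : Integrable (fun ω => 1 / (1 + φ ω)) P)
    (hφ : ∀ᵐ ω ∂P, 0 < 1 + φ ω ∧ φ ω ≤ 1) :
    1 / 2 ≤ ∫ ω, 1 / (1 + φ ω) ∂P := by
  have h := integral_mono_ae (integrable_const (1 / 2 : ℝ)) hint <| by
    filter_upwards [hφ] with ω ⟨hpos, hle⟩
    exact one_div_le_one_div_of_le hpos (by linarith)
  rwa [integral_const, probReal_univ, one_smul] at h

lemma integral_one_sub_div_one_add (hint : Integrable (fun ω => 1 / (1 + φ ω)) P)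
    (hφ : ∀ᵐ ω ∂P, 1 + φ ω ≠ 0) :
    ∫ ω, (1 - φ ω) / (1 + φ ω) ∂P = 2 * ∫ ω, 1 / (1 + φ ω) ∂P - 1 := by
  rw [integral_congr_ae (hφ.mono fun ω => one_sub_div_one_add_eq),
    integral_sub (hint.const_mul 2) (integrable_const 1), integral_const_mul,
    integral_const, probReal_univ, one_smul]

lemma integral_one_sub_div_one_add_mul_self (hint : Integrable (fun ω => 1 / (1 + φ ω)) P)
    (hφint : Integrable φ P) (hφ : ∀ᵐ ω ∂P, 1 + φ ω ≠ 0) :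
    ∫ ω, (1 - φ ω) / (1 + φ ω) * φ ω ∂P =
      2 - 2 * ∫ ω, 1 / (1 + φ ω) ∂P - ∫ ω, φ ω ∂P := by
  have hint' : Integrable (fun ω => 2 - 2 * (1 / (1 + φ ω))) P :=
    (integrable_const 2).sub (hint.const_mul 2)
  rw [integral_congr_ae (hφ.mono fun ω => one_sub_div_one_add_mul_self_eq),
    integral_sub hint' hφint,
    integral_sub (integrable_const 2) (hint.const_mul 2), integral_const_mul,
    integral_const, probReal_univ, one_smul]

end

/-- The first moment of the autoregressive coefficient is identified from the
first two autocorrelations of first differences: `E(φ) = (1 + 2ρ₁ + ρ₂)/(1 + ρ₁)`. -/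
theorem first_moment_identified
    {Ω : Type*} [MeasurableSpace Ω] (P : Measure Ω) [IsProbabilityMeasure P]
    (φ : Ω → ℝ) (hφm : Measurable φ) (ε₀ : ℝ) (hε₀ : 0 < ε₀)
    (hφbd : ∀ᵐ ω ∂P, -1 + ε₀ ≤ φ ω ∧ φ ω ≤ 1)
    (ρ : ℕ → ℝ)
    (hρ : ∀ h : ℕ, 1 ≤ h → ρ h =
      -(∫ ω, ((1 - φ ω) / (1 + φ ω)) * φ ω ^ (h - 1) ∂P) /
        (2 * ∫ ω, 1 / (1 + φ ω) ∂P)) :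
    ∫ ω, φ ω ∂P = (1 + 2 * ρ 1 + ρ 2) / (1 + ρ 1) := by
  have hpos : ∀ᵐ ω ∂P, 0 < 1 + φ ω ∧ φ ω ≤ 1 :=
    hφbd.mono fun ω ⟨h₁, h₂⟩ => ⟨by linarith, h₂⟩
  have hne : ∀ᵐ ω ∂P, 1 + φ ω ≠ 0 := hpos.mono fun ω h => h.1.ne'
  have hint := integrable_one_div_one_add hφm hε₀ (hφbd.mono fun ω h => by linarith [h.1])
  have hφint := integrable_of_ae_abs_le_one hφm
    (hpos.mono fun ω ⟨h₁, h₂⟩ => abs_le.2 ⟨by linarith, h₂⟩)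
  have hd : ∫ ω, 1 / (1 + φ ω) ∂P ≠ 0 := by
    linarith [half_le_integral_one_div_one_add hint hpos]
  refine eq_div_of_autocorrelations hd ?_ ?_
  · simp only [hρ 1 le_rfl, Nat.sub_self, pow_zero, mul_one,
      integral_one_sub_div_one_add hint hne]
  · simp only [hρ 2 one_le_two, Nat.add_one_sub_one, pow_one,
      integral_one_sub_div_one_add_mul_self hint hφint hne]
end

section
/- (Neglected heterogeneity bias of the Anderson–Hsiao estimator, formula) Under the stated assumptions, writing μ_φ = E(φ), the asymptotic bias of the Anderson–Hsiao probability limit satisfies E[((1−φ)/(1+φ)) φ] / E[(1−φ)/(1+φ)] − μ_φ = 2(1+μ_φ) · (1/(1+μ_φ) − E[1/(1+φ)]) / E[(1−φ)/(1+φ)]. -/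
open MeasureTheory

/-- (Neglected heterogeneity bias of the Anderson–Hsiao estimator, formula)
With `μφ = E(φ)`, the asymptotic bias of the Anderson–Hsiao probability limit satisfies
`E[((1−φ)/(1+φ)) φ] / E[(1−φ)/(1+φ)] − μφ
  = 2(1+μφ) (1/(1+μφ) − E[1/(1+φ)]) / E[(1−φ)/(1+φ)]`. -/
theorem ah_bias_formula
    {Ω : Type*} [MeasurableSpace Ω] (P : Measure Ω) [IsProbabilityMeasure P]
    (φ : Ω → ℝ) (hφm : Measurable φ) (ε₀ : ℝ) (hε₀ : 0 < ε₀)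
    (hφbd : ∀ᵐ ω ∂P, -1 + ε₀ ≤ φ ω ∧ φ ω ≤ 1)
    (hne : P {ω | φ ω = 1} < 1) :
    (∫ ω, ((1 - φ ω) / (1 + φ ω)) * φ ω ∂P) /
        (∫ ω, (1 - φ ω) / (1 + φ ω) ∂P) - (∫ ω, φ ω ∂P) =
      2 * (1 + ∫ ω, φ ω ∂P) *
        (1 / (1 + ∫ ω, φ ω ∂P) - ∫ ω, 1 / (1 + φ ω) ∂P) /
        (∫ ω, (1 - φ ω) / (1 + φ ω) ∂P) := by
  have hbd : ∀ᵐ ω ∂P, ε₀ ≤ 1 + φ ω ∧ φ ω ≤ 1 :=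
    hφbd.mono fun ω h => ⟨by linarith [h.1], h.2⟩
  -- measurability
  have hmf : Measurable fun ω => (1 - φ ω) / (1 + φ ω) :=
    (measurable_const.sub hφm).div (measurable_const.add hφm)
  have hmg : Measurable fun ω => 1 / (1 + φ ω) :=
    measurable_const.div (measurable_const.add hφm)
  -- integrability
  have hintφ : Integrable φ P := by
    refine (integrable_const (1 : ℝ)).mono' hφm.aestronglyMeasurable ?_
    exact hφbd.mono fun ω h => by rw [Real.norm_eq_abs, abs_le]; constructor <;> linarith [h.1, h.2]
  have hintf : Integrable (fun ω => (1 - φ ω) / (1 + φ ω)) P := by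
    refine (integrable_const (2 / ε₀ : ℝ)).mono' hmf.aestronglyMeasurable ?_
    refine hbd.mono fun ω h => ?_
    have h1 : 0 < 1 + φ ω := lt_of_lt_of_le hε₀ h.1
    rw [Real.norm_eq_abs, abs_div, abs_of_pos h1, abs_of_nonneg (by linarith : (0:ℝ) ≤ 1 - φ ω)]
    rw [div_le_div_iff₀ h1 hε₀]
    nlinarith [h.1, h.2, hε₀]
  have hintg : Integrable (fun ω => 1 / (1 + φ ω)) P := by
    refine (integrable_const (1 / ε₀ : ℝ)).mono' hmg.aestronglyMeasurable ?_
    refine hbd.mono fun ω h => ?_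
    have h1 : 0 < 1 + φ ω := lt_of_lt_of_le hε₀ h.1
    rw [Real.norm_eq_abs, abs_div, abs_of_pos h1, abs_of_nonneg (by norm_num : (0:ℝ) ≤ 1)]
    exact div_le_div_of_nonneg_left (by norm_num) hε₀ h.1
  have hintfφ : Integrable (fun ω => ((1 - φ ω) / (1 + φ ω)) * φ ω) P := by
    refine (integrable_const (2 / ε₀ : ℝ)).mono' (hmf.mul hφm).aestronglyMeasurable ?_
    refine hbd.mono fun ω h => ?_
    have h1 : 0 < 1 + φ ω := lt_of_lt_of_le hε₀ h.1
    have habsφ : |φ ω| ≤ 1 := abs_le.2 ⟨by linarith [h.1, hε₀], h.2⟩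
    rw [Real.norm_eq_abs, abs_mul, abs_div, abs_of_pos h1,
      abs_of_nonneg (by linarith : (0:ℝ) ≤ 1 - φ ω)]
    calc (1 - φ ω) / (1 + φ ω) * |φ ω| ≤ (1 - φ ω) / (1 + φ ω) * 1 := by
          exact mul_le_mul_of_nonneg_left habsφ (div_nonneg (by linarith) h1.le)
      _ ≤ 2 / ε₀ := by
          rw [mul_one, div_le_div_iff₀ h1 hε₀]
          nlinarith [h.1, h.2, hε₀]
  -- key integral identities
  have ha : (∫ ω, (1 - φ ω) / (1 + φ ω) ∂P)
      = 2 * (∫ ω, 1 / (1 + φ ω) ∂P) - 1 := by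
    have : (∫ ω, (1 - φ ω) / (1 + φ ω) ∂P)
        = ∫ ω, 2 * (1 / (1 + φ ω)) - 1 ∂P := by
      refine integral_congr_ae (hbd.mono fun ω h => ?_)
      have h1 : (1 + φ ω) ≠ 0 := ne_of_gt (lt_of_lt_of_le hε₀ h.1)
      field_simp
      ring
    rw [this, integral_sub (hintg.const_mul 2) (integrable_const 1),
      integral_const_mul, integral_const]
    simp
  have hb : (∫ ω, ((1 - φ ω) / (1 + φ ω)) * φ ω ∂P)
      = (1 - ∫ ω, φ ω ∂P) - ∫ ω, (1 - φ ω) / (1 + φ ω) ∂P := by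
    have : (∫ ω, ((1 - φ ω) / (1 + φ ω)) * φ ω ∂P)
        = ∫ ω, (1 - φ ω) - (1 - φ ω) / (1 + φ ω) ∂P := by
      refine integral_congr_ae (hbd.mono fun ω h => ?_)
      have h1 : (1 + φ ω) ≠ 0 := ne_of_gt (lt_of_lt_of_le hε₀ h.1)
      field_simp
      ring
    have h1i : Integrable (fun ω => 1 - φ ω) P := (integrable_const 1).sub hintφ
    rw [this, integral_sub h1i hintf,
      integral_sub (integrable_const 1) hintφ, integral_const]
    simp
  -- positivity of the denominator
  have hapos : 0 < ∫ ω, (1 - φ ω) / (1 + φ ω) ∂P := by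
    rw [integral_pos_iff_support_of_nonneg_ae ?_ hintf]
    · have hSm : MeasurableSet {ω | φ ω = 1} := hφm (measurableSet_singleton 1)
      have hS : 0 < P {ω | φ ω ≠ 1} := by
        have hc : P {ω | φ ω = 1}ᶜ = 1 - P {ω | φ ω = 1} := prob_compl_eq_one_sub hSm
        have : 0 < P {ω | φ ω = 1}ᶜ := by rw [hc]; exact tsub_pos_of_lt hne
        simpa [Set.compl_setOf] using this
      refine lt_of_lt_of_le hS (measure_mono_ae ?_)
      refine hbd.mono fun ω h hω => ?_
      have h1 : 0 < 1 + φ ω := lt_of_lt_of_le hε₀ h.1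
      have h2 : 0 < 1 - φ ω := lt_of_le_of_ne (by linarith [h.2]) (by
        intro hc; exact hω (by linarith [hc.symm]))
      exact ne_of_gt (div_pos h2 h1)
    · refine hbd.mono fun ω h => ?_
      have h1 : 0 < 1 + φ ω := lt_of_lt_of_le hε₀ h.1
      exact div_nonneg (by linarith [h.2]) h1.le
  have hane : (∫ ω, (1 - φ ω) / (1 + φ ω) ∂P) ≠ 0 := ne_of_gt hapos
  have hμpos : 0 < 1 + ∫ ω, φ ω ∂P := by
    have : (-1 + ε₀ : ℝ) ≤ ∫ ω, φ ω ∂P := by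
      have := integral_mono_ae (integrable_const (-1 + ε₀ : ℝ)) hintφ
        (hφbd.mono fun ω h => h.1)
      simpa using this
    linarith
  have hμne : (1 + ∫ ω, φ ω ∂P) ≠ 0 := ne_of_gt hμpos
  rw [hb, ha] at *
  field_simp
  ring
end

section
/- (Neglected heterogeneity bias of the Anderson–Hsiao estimator, sign) Under the stated assumptions, E[((1−φ)/(1+φ)) φ] / E[(1−φ)/(1+φ)] ≤ E(φ), and equality holds if and only if φ is almost surely equal to the constant E(φ). -/
/-!
The weight `w = (1 - φ) / (1 + φ)` is a strictly decreasing function of `φ`, so `w` and `φ` are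
negatively correlated: with `m = E φ`, the product `(w(m) - w) (φ - m)` is pointwise nonnegative
and vanishes only where `φ = m`, while its expectation is `m E w - E (w φ)`. Dividing by
`E w > 0` (positive because `w ≥ 0` vanishes only on `{φ = 1}`) gives the inequality, and the
equality case is the vanishing of the integral of a nonnegative function.
-/

open MeasureTheory Set

lemma StrictAntiOn.sub_mul_sub_pos {s : Set ℝ} {g : ℝ → ℝ} (hg : StrictAntiOn g s) {x y : ℝ}
    (hx : x ∈ s) (hy : y ∈ s) (hxy : x ≠ y) : 0 < (g y - g x) * (x - y) := by
  rcases hxy.lt_or_gt with h | h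
  · exact mul_pos_of_neg_of_neg (sub_neg.2 (hg hx hy h)) (sub_neg.2 h)
  · exact mul_pos (sub_pos.2 (hg hy hx h)) (sub_pos.2 h)

lemma StrictAntiOn.sub_mul_sub_nonneg {s : Set ℝ} {g : ℝ → ℝ} (hg : StrictAntiOn g s) {x y : ℝ}
    (hx : x ∈ s) (hy : y ∈ s) : 0 ≤ (g y - g x) * (x - y) := by
  rcases eq_or_ne x y with rfl | hxy
  · simp
  · exact (hg.sub_mul_sub_pos hx hy hxy).le

section Covariance

variable {Ω : Type*} [MeasurableSpace Ω] {P : Measure Ω} [IsProbabilityMeasure P] {X Y : Ω → ℝ}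

lemma integrable_const_sub_mul_sub (hX : Integrable X P) (hY : Integrable Y P)
    (hYX : Integrable (fun ω => Y ω * X ω) P) (k c : ℝ) :
    Integrable (fun ω => (k - Y ω) * (X ω - c)) P := by
  refine (((hX.const_mul k).add (hY.const_mul c)).sub (hYX.add (integrable_const (k * c)))).congr ?_
  filter_upwards with ω
  simp only [Pi.add_apply, Pi.sub_apply]
  ring

lemma integral_const_sub_mul_sub_integral (hX : Integrable X P) (hY : Integrable Y P)
    (hYX : Integrable (fun ω => Y ω * X ω) P) (k : ℝ) :
    ∫ ω, (k - Y ω) * (X ω - ∫ ω', X ω' ∂P) ∂P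
      = (∫ ω, X ω ∂P) * (∫ ω, Y ω ∂P) - ∫ ω, Y ω * X ω ∂P := by
  set m := ∫ ω, X ω ∂P
  have hexpand : (fun ω => (k - Y ω) * (X ω - m))
      = fun ω => (k * X ω + m * Y ω) - (Y ω * X ω + k * m) := by
    funext ω; ring
  have hsum : Integrable (fun ω => k * X ω + m * Y ω) P := (hX.const_mul k).add (hY.const_mul m)
  have hprod : Integrable (fun ω => Y ω * X ω + k * m) P := hYX.add (integrable_const _)
  rw [hexpand, integral_sub hsum hprod, integral_add (hX.const_mul k) (hY.const_mul m),
    integral_add hYX (integrable_const _), integral_const_mul, integral_const_mul, integral_const]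
  simp only [probReal_univ, smul_eq_mul, one_mul]
  ring

variable {s : Set ℝ} {g : ℝ → ℝ}

/-- Chebyshev's covariance inequality. -/
theorem integral_comp_mul_le_of_strictAntiOn (hg : StrictAntiOn g s) (hXs : ∀ᵐ ω ∂P, X ω ∈ s)
    (hms : ∫ ω, X ω ∂P ∈ s) (hX : Integrable X P) (hgX : Integrable (fun ω => g (X ω)) P)
    (hgXX : Integrable (fun ω => g (X ω) * X ω) P) :
    ∫ ω, g (X ω) * X ω ∂P ≤ (∫ ω, X ω ∂P) * ∫ ω, g (X ω) ∂P ∧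
      (∫ ω, g (X ω) * X ω ∂P = (∫ ω, X ω ∂P) * ∫ ω, g (X ω) ∂P ↔
        ∀ᵐ ω ∂P, X ω = ∫ ω', X ω' ∂P) := by
  set m := ∫ ω, X ω ∂P
  set F : Ω → ℝ := fun ω => (g m - g (X ω)) * (X ω - m)
  have hF : ∫ ω, F ω ∂P = m * ∫ ω, g (X ω) ∂P - ∫ ω, g (X ω) * X ω ∂P :=
    integral_const_sub_mul_sub_integral hX hgX hgXX (g m)
  have hFi : Integrable F P := integrable_const_sub_mul_sub hX hgX hgXX (g m) m
  have hFnn : 0 ≤ᵐ[P] F := by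
    filter_upwards [hXs] with ω hω using hg.sub_mul_sub_nonneg hω hms
  refine ⟨by linarith [integral_nonneg_of_ae hFnn], ?_⟩
  calc ∫ ω, g (X ω) * X ω ∂P = m * ∫ ω, g (X ω) ∂P ↔ ∫ ω, F ω ∂P = 0 := by
        constructor <;> intro h <;> linarith
    _ ↔ F =ᵐ[P] 0 := integral_eq_zero_iff_of_nonneg_ae hFnn hFi
    _ ↔ ∀ᵐ ω ∂P, X ω = m := by
        refine Filter.eventually_congr (hXs.mono fun ω hω => ?_)
        exact ⟨fun h => by_contra fun hne => (hg.sub_mul_sub_pos hω hms hne).ne' h,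
          fun h => by simp [F, h]⟩

end Covariance

lemma strictAntiOn_one_sub_div_one_add :
    StrictAntiOn (fun x : ℝ => (1 - x) / (1 + x)) (Ioi (-1)) := by
  intro a (ha : -1 < a) b (hb : -1 < b) hab
  rw [div_lt_div_iff₀ (by linarith) (by linarith)]
  nlinarith

lemma one_sub_div_one_add_mem_Icc {ε x : ℝ} (hε : 0 < ε) (hx : x ∈ Icc (-1 + ε) 1) :
    (1 - x) / (1 + x) ∈ Icc 0 (2 / ε) := by
  have hpos : ε ≤ 1 + x := by linarith [hx.1]
  exact ⟨div_nonneg (by linarith [hx.2]) (by linarith),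
    div_le_div₀ zero_le_two (by linarith [hx.1]) hε hpos⟩

lemma integral_one_sub_div_one_add_pos {Ω : Type*} [MeasurableSpace Ω] {P : Measure Ω}
    [IsProbabilityMeasure P] {φ : Ω → ℝ} (hφm : Measurable φ) (hφ : ∀ᵐ ω ∂P, φ ω ∈ Ioc (-1) 1)
    (hi : Integrable (fun ω => (1 - φ ω) / (1 + φ ω)) P) (hne : P {ω | φ ω = 1} < 1) :
    0 < ∫ ω, (1 - φ ω) / (1 + φ ω) ∂P := by
  have hnn : 0 ≤ᵐ[P] fun ω => (1 - φ ω) / (1 + φ ω) := by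
    filter_upwards [hφ] with ω hω
    exact div_nonneg (sub_nonneg.2 hω.2) (by linarith [hω.1])
  refine (integral_nonneg_of_ae hnn).lt_of_ne fun hzero => hne.ne ?_
  have hone : ∀ᵐ ω ∂P, φ ω = 1 := by
    filter_upwards [(integral_eq_zero_iff_of_nonneg_ae hnn hi).1 hzero.symm, hφ] with ω h hω
    have h' : (1 - φ ω) / (1 + φ ω) = 0 := h
    rw [div_eq_zero_iff, sub_eq_zero] at h'
    exact (h'.resolve_right (by linarith [hω.1])).symm
  exact ((ae_iff_measure_eq (hφm (measurableSet_singleton 1)).nullMeasurableSet).1 hone).trans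
    measure_univ

/-- (Neglected heterogeneity bias of the Anderson–Hsiao estimator, sign)
`E[((1−φ)/(1+φ)) φ] / E[(1−φ)/(1+φ)] ≤ E(φ)`, and equality holds if and only if `φ` is
almost surely equal to the constant `E(φ)`. -/
theorem ah_bias_sign
    {Ω : Type*} [MeasurableSpace Ω] (P : Measure Ω) [IsProbabilityMeasure P]
    (φ : Ω → ℝ) (hφm : Measurable φ) (ε₀ : ℝ) (hε₀ : 0 < ε₀)
    (hφbd : ∀ᵐ ω ∂P, -1 + ε₀ ≤ φ ω ∧ φ ω ≤ 1)
    (hne : P {ω | φ ω = 1} < 1) :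
    (∫ ω, ((1 - φ ω) / (1 + φ ω)) * φ ω ∂P) /
        (∫ ω, (1 - φ ω) / (1 + φ ω) ∂P) ≤ ∫ ω, φ ω ∂P ∧
    ((∫ ω, ((1 - φ ω) / (1 + φ ω)) * φ ω ∂P) /
        (∫ ω, (1 - φ ω) / (1 + φ ω) ∂P) = ∫ ω, φ ω ∂P ↔
      ∀ᵐ ω ∂P, φ ω = ∫ ω', φ ω' ∂P) := by
  have hφs : ∀ᵐ ω ∂P, φ ω ∈ Icc (-1 + ε₀) 1 := hφbd
  have hIcc : Icc (-1 + ε₀) 1 ⊆ Ioc (-1) 1 := Icc_subset_Ioc (by linarith) le_rfl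
  have hφi : Integrable φ P := by
    refine .of_bound hφm.aestronglyMeasurable 1 ?_
    filter_upwards [hφs] with ω hω
    exact abs_le.2 ⟨by linarith [hω.1], hω.2⟩
  have hwm : Measurable fun ω => (1 - φ ω) / (1 + φ ω) :=
    (measurable_const.sub hφm).div (measurable_const.add hφm)
  have hwbd : ∀ᵐ ω ∂P, ‖(1 - φ ω) / (1 + φ ω)‖ ≤ 2 / ε₀ := by
    filter_upwards [hφs] with ω hω
    obtain ⟨hw0, hw2⟩ := one_sub_div_one_add_mem_Icc hε₀ hω
    rwa [Real.norm_of_nonneg hw0]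
  have hwi := Integrable.of_bound hwm.aestronglyMeasurable _ hwbd
  have hwφi := hφi.bdd_mul hwm.aestronglyMeasurable hwbd
  have hmean := (convex_Icc _ _).integral_mem isClosed_Icc hφs hφi
  have hpos := integral_one_sub_div_one_add_pos hφm (hφs.mono fun _ h => hIcc h) hwi hne
  obtain ⟨hle, heq⟩ := integral_comp_mul_le_of_strictAntiOn
    (strictAntiOn_one_sub_div_one_add.mono fun _ h => (hIcc h).1) hφs hmean hφi hwi hwφi
  rw [div_le_iff₀ hpos, div_eq_iff hpos.ne']
  exact ⟨hle, heq⟩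
end

section
/- (Anderson–Hsiao bias under uniformly distributed coefficients) Let μ ∈ ℝ and a > 0 satisfy −1 < μ − a and μ + a ≤ 1, and set δ = a/(1+μ) and L = log((1+δ)/(1−δ)). Then L > a, and (∫_{μ−a}^{μ+a} x(1−x)/(1+x) dx) / (∫_{μ−a}^{μ+a} (1−x)/(1+x) dx) − μ = 2(1+μ)(δ − L/2)/(L − a). (The left-hand side is the asymptotic bias of the Anderson–Hsiao estimator when the heterogeneous AR(1) coefficients are uniformly distributed on [μ−a, μ+a] with mean μ, since the uniform normalizing constants cancel in the ratio.) -/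
/-!
Since `(1 - x)/(1 + x) = 2/(1 + x) - 1` and `x(1 - x)/(1 + x) = (1 - x) - (1 - x)/(1 + x)`, both
integrals are elementary: over `[μ - a, μ + a]` the denominator is `2L - 2a` with
`L = log((1 + μ + a)/(1 + μ - a)) = log((1 + δ)/(1 - δ))`, and the numerator is
`2a(1 - μ)` minus the denominator. The inequality `a < L` is `log y < y - 1` at
`y = (1 - δ)/(1 + δ)`, combined with `(1 + μ)(1 + δ) = 1 + μ + a ≤ 2`.
-/

open Real intervalIntegral

lemma lt_log_one_add_div_one_sub {δ : ℝ} (h₀ : 0 < δ) (h₁ : δ < 1) :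
    2 * δ / (1 + δ) < log ((1 + δ) / (1 - δ)) := by
  have hlog : log ((1 - δ) / (1 + δ)) < (1 - δ) / (1 + δ) - 1 :=
    log_lt_sub_one_of_pos (by positivity) (by rw [Ne, div_eq_one_iff_eq (by positivity)]; linarith)
  have hneg : log ((1 - δ) / (1 + δ)) = -log ((1 + δ) / (1 - δ)) := by rw [← log_inv, inv_div]
  have : (1 - δ) / (1 + δ) - 1 = -(2 * δ / (1 + δ)) := by field_simp; ring
  linarith

section Integrals

variable {p q : ℝ}

lemma one_add_pos_of_mem_uIcc (hp : -1 < p) (hq : -1 < q) {x : ℝ} (hx : x ∈ Set.uIcc p q) :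
    0 < 1 + x := by
  have : -1 < min p q := lt_min hp hq
  linarith [hx.1]

lemma intervalIntegrable_one_sub_div_one_add (hp : -1 < p) (hq : -1 < q) :
    IntervalIntegrable (fun x : ℝ => (1 - x) / (1 + x)) MeasureTheory.volume p q :=
  ContinuousOn.intervalIntegrable <| (by fun_prop : Continuous fun x : ℝ => 1 - x).continuousOn.div
    (by fun_prop) fun x hx => (one_add_pos_of_mem_uIcc hp hq hx).ne'

lemma integral_one_sub_div_one_add_s11 (hp : -1 < p) (hq : -1 < q) :
    ∫ x in p..q, (1 - x) / (1 + x) = 2 * log ((1 + q) / (1 + p)) - (q - p) := by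
  have hderiv : ∀ x ∈ Set.uIcc p q,
      HasDerivAt (fun y => 2 * log (1 + y) - y) ((1 - x) / (1 + x)) x := by
    intro x hx
    have hx₀ := (one_add_pos_of_mem_uIcc hp hq hx).ne'
    refine ((((hasDerivAt_id' x).const_add 1).log hx₀).const_mul 2).sub
      (hasDerivAt_id' x) |>.congr_deriv ?_
    field_simp
    ring
  rw [integral_eq_sub_of_hasDerivAt hderiv (intervalIntegrable_one_sub_div_one_add hp hq),
    log_div (by linarith) (by linarith)]
  ring

lemma integral_mul_one_sub_div_one_add (hp : -1 < p) (hq : -1 < q) :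
    ∫ x in p..q, x * (1 - x) / (1 + x) =
      (q - p) - (q ^ 2 - p ^ 2) / 2 - ∫ x in p..q, (1 - x) / (1 + x) := by
  have hsplit : Set.EqOn (fun x : ℝ => x * (1 - x) / (1 + x))
      (fun x => (1 - x) - (1 - x) / (1 + x)) (Set.uIcc p q) := by
    intro x hx
    have hx₀ := (one_add_pos_of_mem_uIcc hp hq hx).ne'
    field_simp
    ring
  have hlin : IntervalIntegrable (fun x : ℝ => 1 - x) MeasureTheory.volume p q :=
    (continuous_const.sub continuous_id).intervalIntegrable p q
  rw [integral_congr hsplit, integral_sub hlin (intervalIntegrable_one_sub_div_one_add hp hq),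
    integral_sub intervalIntegrable_const intervalIntegrable_id, integral_one, integral_id]

end Integrals

/-- (Anderson–Hsiao bias under uniformly distributed coefficients)
Let `μ ∈ ℝ` and `a > 0` satisfy `−1 < μ − a` and `μ + a ≤ 1`, and set `δ = a/(1+μ)` and
`L = log((1+δ)/(1−δ))`. Then `L > a`, and
`(∫_{μ−a}^{μ+a} x(1−x)/(1+x) dx) / (∫_{μ−a}^{μ+a} (1−x)/(1+x) dx) − μ
  = 2(1+μ)(δ − L/2)/(L − a)`. -/
theorem ah_bias_uniform (μ a : ℝ) (ha : 0 < a) (hlo : -1 < μ - a) (hhi : μ + a ≤ 1)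
    (δ L : ℝ) (hδ : δ = a / (1 + μ)) (hL : L = Real.log ((1 + δ) / (1 - δ))) :
    a < L ∧
    (∫ x in (μ - a)..(μ + a), x * (1 - x) / (1 + x)) /
        (∫ x in (μ - a)..(μ + a), (1 - x) / (1 + x)) - μ =
      2 * (1 + μ) * (δ - L / 2) / (L - a) := by
  have hμ : 0 < 1 + μ := by linarith
  have hδa : a = (1 + μ) * δ := by rw [hδ]; field_simp
  have hδ₀ : 0 < δ := by rw [hδ]; positivity
  have hδ₁ : δ < 1 := by rw [hδ, div_lt_one hμ]; linarith
  have hL' : L = log ((1 + (μ + a)) / (1 + (μ - a))) := by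
    rw [hL, hδ]
    congr 1
    field_simp
    ring
  have haL : a < L := calc
    a ≤ 2 * δ / (1 + δ) := by rw [le_div_iff₀ (by linarith)]; nlinarith
    _ < L := hL ▸ lt_log_one_add_div_one_sub hδ₀ hδ₁
  have hD : ∫ x in (μ - a)..(μ + a), (1 - x) / (1 + x) = 2 * L - 2 * a := by
    rw [integral_one_sub_div_one_add_s11 (by linarith) (by linarith), ← hL']
    ring
  refine ⟨haL, ?_⟩
  rw [integral_mul_one_sub_div_one_add (by linarith) (by linarith), hD]
  have : L - a ≠ 0 := (sub_pos.2 haL).ne'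
  field_simp
  linear_combination 8 * hδa
end

section
/- (Anderson–Hsiao bias under categorically distributed coefficients) Let φ_L, φ_H, π ∈ ℝ with 0 < φ_L < φ_H ≤ 1 and 0 < π < 1, and for a function f : ℝ → ℝ write E[f(φ)] = π f(φ_L) + (1−π) f(φ_H), with μ_φ = E[φ] = π φ_L + (1−π) φ_H. Then E[φ(1−φ)/(1+φ)] / E[(1−φ)/(1+φ)] − μ_φ = −2π(1−π)(φ_H − φ_L)² / (π(1−φ_L)(1+φ_H) + (1−π)(1+φ_L)(1−φ_H)), and the denominator π(1−φ_L)(1+φ_H) + (1−π)(1+φ_L)(1−φ_H) is strictly positive. -/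
/-!
Writing `g φ = (1 - φ) / (1 + φ)`, the bias `E[φ g(φ)] / E[g(φ)] - E[φ]` is `Cov(φ, g(φ)) / E[g(φ)]`.
For a two-point law the covariance is `π (1 - π) (φL - φH) (g φL - g φH)`, and
`g φL - g φH = 2 (φH - φL) / ((1 + φL) (1 + φH))`; clearing `(1 + φL) (1 + φH)` from `E[g(φ)]`
gives the stated denominator.
-/

theorem two_point_weighted_mean_sub_mean (w a b x y : ℝ) (h : w * x + (1 - w) * y ≠ 0) :
    (w * (a * x) + (1 - w) * (b * y)) / (w * x + (1 - w) * y) - (w * a + (1 - w) * b) =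
      w * (1 - w) * (a - b) * (x - y) / (w * x + (1 - w) * y) := by
  rw [div_sub' h, div_left_inj' h]
  ring

theorem one_sub_div_one_add_sub_one_sub_div_one_add {a b : ℝ} (ha : 1 + a ≠ 0) (hb : 1 + b ≠ 0) :
    (1 - a) / (1 + a) - (1 - b) / (1 + b) = 2 * (b - a) / ((1 + a) * (1 + b)) := by
  field_simp
  ring

theorem two_point_mean_one_sub_div_one_add {a b : ℝ} (ha : 1 + a ≠ 0) (hb : 1 + b ≠ 0) (w : ℝ) :
    w * ((1 - a) / (1 + a)) + (1 - w) * ((1 - b) / (1 + b)) =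
      (w * (1 - a) * (1 + b) + (1 - w) * (1 + a) * (1 - b)) / ((1 + a) * (1 + b)) := by
  field_simp

theorem two_point_denominator_pos {a b w : ℝ} (ha : -1 ≤ a) (hab : a < b) (hb : b ≤ 1)
    (hw0 : 0 < w) (hw1 : w ≤ 1) :
    0 < w * (1 - a) * (1 + b) + (1 - w) * (1 + a) * (1 - b) := by
  have hfirst : 0 < w * (1 - a) * (1 + b) :=
    mul_pos (mul_pos hw0 (sub_pos.2 (hab.trans_le hb))) (by linarith)
  have hsecond : 0 ≤ (1 - w) * (1 + a) * (1 - b) :=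
    mul_nonneg (mul_nonneg (sub_nonneg.2 hw1) (by linarith)) (sub_nonneg.2 hb)
  linarith

/-- (Anderson–Hsiao bias under categorically distributed coefficients)
Let `φL, φH, π ∈ ℝ` with `0 < φL < φH ≤ 1` and `0 < π < 1`, and write
`E[f(φ)] = π f(φL) + (1−π) f(φH)`, with `μφ = E[φ] = π φL + (1−π) φH`. Then
`E[φ(1−φ)/(1+φ)] / E[(1−φ)/(1+φ)] − μφ
  = −2π(1−π)(φH − φL)² / (π(1−φL)(1+φH) + (1−π)(1+φL)(1−φH))`,
and the denominator is strictly positive. -/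
theorem ah_bias_categorical (φL φH π : ℝ)
    (hφL : 0 < φL) (hLH : φL < φH) (hφH : φH ≤ 1) (hπ0 : 0 < π) (hπ1 : π < 1) :
    0 < π * (1 - φL) * (1 + φH) + (1 - π) * (1 + φL) * (1 - φH) ∧
    (π * (φL * (1 - φL) / (1 + φL)) + (1 - π) * (φH * (1 - φH) / (1 + φH))) /
        (π * ((1 - φL) / (1 + φL)) + (1 - π) * ((1 - φH) / (1 + φH))) -
      (π * φL + (1 - π) * φH) =
      -(2 * π * (1 - π) * (φH - φL) ^ 2) /
        (π * (1 - φL) * (1 + φH) + (1 - π) * (1 + φL) * (1 - φH)) := by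
  have hL : 1 + φL ≠ 0 := by positivity
  have hH : 1 + φH ≠ 0 := by linarith
  have hD := two_point_denominator_pos (by linarith) hLH hφH hπ0 hπ1.le
  have hmean := two_point_mean_one_sub_div_one_add hL hH π
  refine ⟨hD, ?_⟩
  rw [mul_div_assoc φL, mul_div_assoc φH,
    two_point_weighted_mean_sub_mean _ _ _ _ _ (hmean ▸ by positivity),
    one_sub_div_one_add_sub_one_sub_div_one_add hL hH, hmean]
  field_simp
  ring
end

section
/- (Strong consistency of the FDAC estimator of the mean AR coefficient, exactly identified case) Let (Ω, P) be a probability space and let (A_i, B_i, C_i)_{i∈ℕ} be a sequence of integrable ℝ³-valued random vectors that are independent and identically distributed. Suppose there exist a probability space (Ω', P') carrying a measurable random variable φ : Ω' → ℝ with −1+ε₀ ≤ φ ≤ 1 P'-almost surely for some constant ε₀ > 0, a measurable random variable σ : Ω' → ℝ independent of φ with 0 < E'(σ²) < ∞, such that E(A₁) = 2 E'(σ²) E'[1/(1+φ)], E(B₁) = −E'(σ²) E'[(1−φ)/(1+φ)], and E(C₁) = −E'(σ²) E'[((1−φ)/(1+φ)) φ]. Then, P-almost surely, (∑_{i=1}^{n}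 (A_i + 2B_i + C_i)) / (∑_{i=1}^{n} (A_i + B_i)) converges to E'(φ) as n → ∞. -/
/-! The strong law of large numbers, applied to the i.i.d. sequences `A_i + 2 B_i + C_i` and
`A_i + B_i`, sends the numerator and the denominator, divided by `n`, to their means.
Because `φ` stays away from `-1`, the pointwise identities
`2/(1+φ) - (1-φ)/(1+φ) = 1` and `2/(1+φ) - 2(1-φ)/(1+φ) - (1-φ)φ/(1+φ) = φ`
can be integrated, so these means are `E'(σ²) E'(φ)` and `E'(σ²)`, whose ratio is `E'(φ)`. -/

open MeasureTheory ProbabilityTheory Filter Set Topology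

section StrongLaw

variable {Ω E : Type*} [MeasurableSpace Ω] [MeasurableSpace E] {μ : Measure Ω}
  {V : ℕ → Ω → E}

lemma tendsto_div_of_tendsto_div_natCast {a b : ℕ → ℝ} {x y : ℝ}
    (ha : Tendsto (fun n : ℕ => a n / n) atTop (𝓝 x))
    (hb : Tendsto (fun n : ℕ => b n / n) atTop (𝓝 y)) (hy : y ≠ 0) :
    Tendsto (fun n => a n / b n) atTop (𝓝 (x / y)) := by
  refine (ha.div hb hy).congr' ?_
  filter_upwards [eventually_ne_atTop 0] with n hn
  exact div_div_div_cancel_right₀ (Nat.cast_ne_zero.2 hn) _ _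

lemma ae_tendsto_sum_comp_div_natCast (hindep : iIndepFun V μ)
    (hident : ∀ i, IdentDistrib (V i) (V 0) μ μ) {f : E → ℝ} (hf : Measurable f)
    (hfi : Integrable (fun ω => f (V 0 ω)) μ) :
    ∀ᵐ ω ∂μ, Tendsto (fun n : ℕ => (∑ i ∈ Finset.range n, f (V i ω)) / n) atTop
      (𝓝 (∫ ω, f (V 0 ω) ∂μ)) :=
  strong_law_ae_real (fun i ω => f (V i ω)) hfi
    (fun _ _ hij => (hindep.indepFun hij).comp hf hf) fun i => (hident i).comp hf

lemma ae_tendsto_sum_comp_div_sum_comp (hindep : iIndepFun V μ)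
    (hident : ∀ i, IdentDistrib (V i) (V 0) μ μ) {f g : E → ℝ} (hf : Measurable f)
    (hg : Measurable g) (hfi : Integrable (fun ω => f (V 0 ω)) μ)
    (hgi : Integrable (fun ω => g (V 0 ω)) μ) (hg0 : ∫ ω, g (V 0 ω) ∂μ ≠ 0) :
    ∀ᵐ ω ∂μ, Tendsto (fun n =>
        (∑ i ∈ Finset.range n, f (V i ω)) / ∑ i ∈ Finset.range n, g (V i ω)) atTop
      (𝓝 ((∫ ω, f (V 0 ω) ∂μ) / ∫ ω, g (V 0 ω) ∂μ)) := by
  filter_upwards [ae_tendsto_sum_comp_div_natCast hindep hident hf hfi,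
    ae_tendsto_sum_comp_div_natCast hindep hident hg hgi] with ω hfω hgω
  exact tendsto_div_of_tendsto_div_natCast hfω hgω hg0

end StrongLaw

section BoundedMoments

variable {Ω : Type*} [MeasurableSpace Ω] {μ : Measure Ω} {φ : Ω → ℝ} {ε : ℝ}

lemma integrable_comp_of_ae_mem_Icc [IsFiniteMeasure μ] {h : ℝ → ℝ} {a b : ℝ}
    (hh : ContinuousOn h (Icc a b)) (hhm : Measurable h) (hφm : Measurable φ)
    (hφ : ∀ᵐ ω ∂μ, φ ω ∈ Icc a b) : Integrable (fun ω => h (φ ω)) μ := by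
  obtain ⟨C, hC⟩ := isCompact_Icc.exists_bound_of_continuousOn hh
  refine Integrable.of_bound (hhm.comp hφm).aestronglyMeasurable C ?_
  filter_upwards [hφ] with ω hω using hC _ hω

lemma integrable_div_one_add_of_ae_mem_Icc [IsFiniteMeasure μ] (hε : 0 < ε)
    (hφm : Measurable φ) (hφ : ∀ᵐ ω ∂μ, φ ω ∈ Icc (-1 + ε) 1) {g : ℝ → ℝ} (hg : Continuous g) :
    Integrable (fun ω => g (φ ω) / (1 + φ ω)) μ :=
  integrable_comp_of_ae_mem_Icc (h := fun x => g x / (1 + x))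
    (hg.continuousOn.div (by fun_prop) fun x hx => by linarith [hx.1]) (by fun_prop) hφm hφ

lemma fdac_denominator_moment [IsProbabilityMeasure μ] (hε : 0 < ε) (hφm : Measurable φ)
    (hφ : ∀ᵐ ω ∂μ, φ ω ∈ Icc (-1 + ε) 1) :
    2 * ∫ ω, 1 / (1 + φ ω) ∂μ - ∫ ω, (1 - φ ω) / (1 + φ ω) ∂μ = 1 := by
  have h : ∫ ω, (2 * (1 / (1 + φ ω)) - (1 - φ ω) / (1 + φ ω)) ∂μ = ∫ _, 1 ∂μ := by
    refine integral_congr_ae ?_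
    filter_upwards [hφ] with ω hω
    have : 1 + φ ω ≠ 0 := by linarith [hω.1]
    field_simp
    ring
  have h₁ := integrable_div_one_add_of_ae_mem_Icc hε hφm hφ (g := fun _ => 1) continuous_const
  have h₂ := integrable_div_one_add_of_ae_mem_Icc hε hφm hφ (continuous_sub_left 1)
  rwa [integral_sub (h₁.const_mul 2) h₂, integral_const_mul, integral_const, probReal_univ,
    one_smul] at h

lemma fdac_numerator_moment [IsFiniteMeasure μ] (hε : 0 < ε) (hφm : Measurable φ)
    (hφ : ∀ᵐ ω ∂μ, φ ω ∈ Icc (-1 + ε) 1) :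
    2 * ∫ ω, 1 / (1 + φ ω) ∂μ - 2 * ∫ ω, (1 - φ ω) / (1 + φ ω) ∂μ
      - ∫ ω, (1 - φ ω) / (1 + φ ω) * φ ω ∂μ = ∫ ω, φ ω ∂μ := by
  have h₁ := integrable_div_one_add_of_ae_mem_Icc hε hφm hφ (g := fun _ => 1) continuous_const
  have h₂ := integrable_div_one_add_of_ae_mem_Icc hε hφm hφ (continuous_sub_left 1)
  have h₃ : Integrable (fun ω => (1 - φ ω) / (1 + φ ω) * φ ω) μ := by
    simpa only [div_mul_eq_mul_div] using integrable_div_one_add_of_ae_mem_Icc hε hφm hφ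
      (g := fun x => (1 - x) * x) (by fun_prop)
  have h : ∫ ω, (2 * (1 / (1 + φ ω)) - 2 * ((1 - φ ω) / (1 + φ ω))
      - (1 - φ ω) / (1 + φ ω) * φ ω) ∂μ = ∫ ω, φ ω ∂μ := by
    refine integral_congr_ae ?_
    filter_upwards [hφ] with ω hω
    have : 1 + φ ω ≠ 0 := by linarith [hω.1]
    field_simp
    ring
  rwa [integral_sub (f := fun ω => 2 * (1 / (1 + φ ω)) - 2 * ((1 - φ ω) / (1 + φ ω)))
    ((h₁.const_mul 2).sub (h₂.const_mul 2)) h₃,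
    integral_sub (h₁.const_mul 2) (h₂.const_mul 2), integral_const_mul, integral_const_mul] at h

end BoundedMoments

theorem fdac_strong_consistency_general
    {Ω : Type*} [MeasurableSpace Ω] (P : Measure Ω) [IsProbabilityMeasure P]
    (A B C : ℕ → Ω → ℝ)
    (hint : ∀ i : ℕ, Integrable (A i) P ∧ Integrable (B i) P ∧ Integrable (C i) P)
    (hindep : iIndepFun
      (fun i ω => (A i ω, B i ω, C i ω)) P)
    (hident : ∀ i : ℕ, IdentDistrib (fun ω => (A i ω, B i ω, C i ω))
      (fun ω => (A 0 ω, B 0 ω, C 0 ω)) P P)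
    {Ω' : Type*} [MeasurableSpace Ω'] (P' : Measure Ω') [IsProbabilityMeasure P']
    (φ σ : Ω' → ℝ) (ε₀ : ℝ) (hε₀ : 0 < ε₀)
    (hφm : Measurable φ) (hφbd : ∀ᵐ ω ∂P', -1 + ε₀ ≤ φ ω ∧ φ ω ≤ 1)
    (hσ2pos : 0 < ∫ ω, (σ ω) ^ 2 ∂P')
    (hA : ∫ ω, A 0 ω ∂P =
      2 * (∫ ω, (σ ω) ^ 2 ∂P') * ∫ ω, 1 / (1 + φ ω) ∂P')
    (hB : ∫ ω, B 0 ω ∂P =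
      -(∫ ω, (σ ω) ^ 2 ∂P') * ∫ ω, (1 - φ ω) / (1 + φ ω) ∂P')
    (hC : ∫ ω, C 0 ω ∂P =
      -(∫ ω, (σ ω) ^ 2 ∂P') * ∫ ω, ((1 - φ ω) / (1 + φ ω)) * φ ω ∂P') :
    ∀ᵐ ω ∂P, Tendsto (fun n : ℕ =>
        (∑ i ∈ Finset.range n, (A i ω + 2 * B i ω + C i ω)) /
          (∑ i ∈ Finset.range n, (A i ω + B i ω)))
      atTop (nhds (∫ ω, φ ω ∂P')) := by
  obtain ⟨hA₀, hB₀, hC₀⟩ := hint 0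
  set S := ∫ ω, σ ω ^ 2 ∂P'
  have hden : ∫ ω, (A 0 ω + B 0 ω) ∂P = S := by
    rw [integral_add hA₀ hB₀, hA, hB]
    linear_combination S * fdac_denominator_moment hε₀ hφm hφbd
  have hnum : ∫ ω, (A 0 ω + 2 * B 0 ω + C 0 ω) ∂P = S * ∫ ω, φ ω ∂P' := by
    rw [integral_add (f := fun ω => A 0 ω + 2 * B 0 ω) (hA₀.add (hB₀.const_mul 2)) hC₀,
      integral_add hA₀ (hB₀.const_mul 2), integral_const_mul, hA, hB, hC]
    linear_combination S * fdac_numerator_moment hε₀ hφm hφbd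
  have h := ae_tendsto_sum_comp_div_sum_comp hindep hident
    (f := fun v : ℝ × ℝ × ℝ => v.1 + 2 * v.2.1 + v.2.2) (g := fun v => v.1 + v.2.1)
    (by fun_prop) (by fun_prop) ((hA₀.add (hB₀.const_mul 2)).add hC₀) (hA₀.add hB₀)
    (hden ▸ hσ2pos.ne')
  rwa [hnum, hden, mul_div_cancel_left₀ _ hσ2pos.ne'] at h

/-- (Strong consistency of the FDAC estimator of the mean AR coefficient, exactly
identified case) Let `(A_i, B_i, C_i)` be an i.i.d. sequence of integrable `ℝ³`-valued
random vectors whose means coincide with the population moments implied by the stationary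
heterogeneous panel AR(1) model with AR coefficient `φ` independent of the error scale `σ`
(defined on an auxiliary probability space `(Ω', P')`):
`E(A₁) = 2 E'(σ²) E'[1/(1+φ)]`, `E(B₁) = −E'(σ²) E'[(1−φ)/(1+φ)]`,
`E(C₁) = −E'(σ²) E'[((1−φ)/(1+φ)) φ]`. Then, almost surely,
`(∑_{i=1}^{n} (A_i + 2B_i + C_i)) / (∑_{i=1}^{n} (A_i + B_i)) → E'(φ)` as `n → ∞`. -/
theorem fdac_strong_consistency
    {Ω : Type*} [MeasurableSpace Ω] (P : Measure Ω) [IsProbabilityMeasure P]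
    (A B C : ℕ → Ω → ℝ)
    (hint : ∀ i : ℕ, Integrable (A i) P ∧ Integrable (B i) P ∧ Integrable (C i) P)
    (hindep : iIndepFun
      (fun i ω => (A i ω, B i ω, C i ω)) P)
    (hident : ∀ i : ℕ, IdentDistrib (fun ω => (A i ω, B i ω, C i ω))
      (fun ω => (A 0 ω, B 0 ω, C 0 ω)) P P)
    {Ω' : Type*} [MeasurableSpace Ω'] (P' : Measure Ω') [IsProbabilityMeasure P']
    (φ σ : Ω' → ℝ) (ε₀ : ℝ) (hε₀ : 0 < ε₀)
    (hφm : Measurable φ) (hφbd : ∀ᵐ ω ∂P', -1 + ε₀ ≤ φ ω ∧ φ ω ≤ 1)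
    (hσm : Measurable σ) (hφσ : IndepFun φ σ P')
    (hσ2int : Integrable (fun ω => (σ ω) ^ 2) P')
    (hσ2pos : 0 < ∫ ω, (σ ω) ^ 2 ∂P')
    (hA : ∫ ω, A 0 ω ∂P =
      2 * (∫ ω, (σ ω) ^ 2 ∂P') * ∫ ω, 1 / (1 + φ ω) ∂P')
    (hB : ∫ ω, B 0 ω ∂P =
      -(∫ ω, (σ ω) ^ 2 ∂P') * ∫ ω, (1 - φ ω) / (1 + φ ω) ∂P')
    (hC : ∫ ω, C 0 ω ∂P =
      -(∫ ω, (σ ω) ^ 2 ∂P') * ∫ ω, ((1 - φ ω) / (1 + φ ω)) * φ ω ∂P') :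
    ∀ᵐ ω ∂P, Tendsto (fun n : ℕ =>
        (∑ i ∈ Finset.range n, (A i ω + 2 * B i ω + C i ω)) /
          (∑ i ∈ Finset.range n, (A i ω + B i ω)))
      atTop (nhds (∫ ω, φ ω ∂P')) :=
  fdac_strong_consistency_general P A B C hint hindep hident P' φ σ ε₀ hε₀ hφm hφbd hσ2pos hA hB hC
end
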